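/- Let (X, 𝓑, μ, f) be a dissipative system of bounded distortion generated by W, with f bijective and both f and f⁻¹ satisfying condition (⋆), and let 1 ≤ p < ∞. If condition 𝓖𝓗 holds, i.e. limsup_{n→∞} sup_{k≤0} (μ(f^{k−n}(W))/μ(f^k(W)))^{1/n} < 1 and liminf_{n→∞} inf_{k≥0} (μ(f^k(W))/μ(f^{k+n}(W)))^{1/n} > 1, then the composition operator T_f on L^p(X, μ) is generalized hyperbolic; moreover the witnessing splitting is L^p(X, μ) = L_+ ⊕ L_−, where L_+ is the subspace of functions vanishing a.e. on ⋃_{k≥0} f^k(W) and L_− is the subspace of functions vanishing a.e. on ⋃_{k≥1} f^{−k}(W). -/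

import Mathlib

/-!
With `A = ⋃_{k ≥ 0} f^k(W)`, the partition `X = A ⊔ Aᶜ` splits `L^p` into the functions
vanishing on `A` and those vanishing on `Aᶜ`; as `f(A) ⊆ A`, these summands are invariant
under `T_f` and `T_f⁻¹` respectively. For `φ` supported on `Aᶜ = ⋃_{m ≥ 0} f^{-m-1}(W)` one has
`‖T_fⁿ φ‖_p^p = ∫ |φ|^p d(f^n_* μ)`, and on each piece `f^{-m-1}(W)` bounded distortion compares
`f^n_* μ` with `μ` up to `K²` times `μ(f^{-m-1-n}(W)) / μ(f^{-m-1}(W))`, which the first half of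
condition 𝓖𝓗 bounds by `rⁿ` (`r < 1`) for large `n`, uniformly in `m`. The second half of 𝓖𝓗
gives the same for `T_f⁻¹` on functions supported on `A`.
-/

open MeasureTheory Filter Set Function Topology ENNReal

noncomputable section

namespace GHShadow

/-- The shadowing property for an invertible bounded linear operator. -/
def HasShadowing {E : Type*} [NormedAddCommGroup E] [NormedSpace ℝ E]
    (T : E ≃L[ℝ] E) : Prop :=
  ∀ ε : ℝ, 0 < ε → ∃ δ : ℝ, 0 < δ ∧ ∀ x : ℤ → E,
    (∀ n : ℤ, ‖T (x n) - x (n + 1)‖ ≤ δ) →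
      ∃ y : E, ∀ n : ℤ, ‖(T ^ n) y - x n‖ < ε

/-- `lim ‖Tⁿ‖^{1/n}` exists and is `< 1`. -/
def SpectralRadiusLtOne {E : Type*} [NormedAddCommGroup E] [NormedSpace ℝ E]
    (T : E →L[ℝ] E) : Prop :=
  ∃ r : ℝ, r < 1 ∧ Tendsto (fun n : ℕ => ‖T ^ n‖ ^ (1 / (n : ℝ))) atTop (nhds r)

/-- The restriction of `T` to `M` has spectral radius `< 1`
(equivalently, is a proper contraction in an equivalent norm). -/
def ContractsOn {E : Type*} [NormedAddCommGroup E] [NormedSpace ℝ E]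
    (T : E ≃L[ℝ] E) (M : Submodule ℝ E) : Prop :=
  ∃ C : ℝ, 0 < C ∧ ∃ t : ℝ, 0 < t ∧ t < 1 ∧
    ∀ n : ℕ, ∀ x ∈ M, ‖(T ^ n) x‖ ≤ C * t ^ n * ‖x‖

def GeneralizedHyperbolic {E : Type*} [NormedAddCommGroup E] [NormedSpace ℝ E]
    (T : E ≃L[ℝ] E) : Prop :=
  ∃ M N : Submodule ℝ E, IsClosed (M : Set E) ∧ IsClosed (N : Set E) ∧
    IsCompl M N ∧ (∀ x ∈ M, T x ∈ M) ∧ (∀ x ∈ N, T.symm x ∈ N) ∧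
    ContractsOn T M ∧ ContractsOn T.symm N

variable {X : Type*} [MeasurableSpace X]

/-- image of `B` under the `k`-th iterate of the invertible map `f`. -/
def img (f : Equiv.Perm X) (k : ℤ) (B : Set X) : Set X := ⇑(f ^ k) '' B

/-- `(X, 𝓑, μ, f)` is a dissipative system generated by `W`. -/
structure IsDissipative (μ : Measure X) (f : Equiv.Perm X) (W : Set X) : Prop where
  sigmaFin : SigmaFinite μ
  meas_f : Measurable f
  meas_symm : Measurable f.symm
  meas_W : MeasurableSet W
  pos : 0 < μ W
  fin : μ W < ⊤
  disj : Pairwise fun k l : ℤ => Disjoint (img f k W) (img f l W)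
  cover : (⋃ k : ℤ, img f k W) = univ

/-- `f` is of bounded distortion on `W` with constant `K`. -/
def BoundedDistortion (μ : Measure X) (f : Equiv.Perm X) (W : Set X) (K : ℝ≥0∞) : Prop :=
  ∀ k : ℤ, ∀ B : Set X, MeasurableSet B → B ⊆ W →
    (1 / K) * (μ (img f k W) * μ B) ≤ μ (img f k B) * μ W ∧
      μ (img f k B) * μ W ≤ K * (μ (img f k W) * μ B)

/-- condition (⋆) for a transformation `g`. -/
def CondStar (μ : Measure X) (g : X → X) : Prop :=
  ∃ c : ℝ≥0∞, 0 < c ∧ c ≠ ⊤ ∧ ∀ B : Set X, MeasurableSet B → μ (g ⁻¹' B) ≤ c * μ B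

/-- condition 𝓗𝓒. -/
def CondHC (μ : Measure X) (f : Equiv.Perm X) (W : Set X) : Prop :=
  limsup (fun n : ℕ =>
    ⨆ k : ℤ, (μ (img f k W) / μ (img f (k + (n : ℤ)) W)) ^ (1 / (n : ℝ))) atTop < 1

/-- condition 𝓗𝓓. -/
def CondHD (μ : Measure X) (f : Equiv.Perm X) (W : Set X) : Prop :=
  1 < liminf (fun n : ℕ =>
    ⨅ k : ℤ, (μ (img f k W) / μ (img f (k + (n : ℤ)) W)) ^ (1 / (n : ℝ))) atTop

/-- condition 𝓖𝓗. -/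
def CondGH (μ : Measure X) (f : Equiv.Perm X) (W : Set X) : Prop :=
  limsup (fun n : ℕ =>
      ⨆ m : ℕ, (μ (img f (-(m : ℤ) - (n : ℤ)) W) / μ (img f (-(m : ℤ)) W)) ^ (1 / (n : ℝ)))
      atTop < 1 ∧
  1 < liminf (fun n : ℕ =>
      ⨅ m : ℕ, (μ (img f (m : ℤ) W) / μ (img f ((m : ℤ) + (n : ℤ)) W)) ^ (1 / (n : ℝ))) atTop

/-- `T` represents the composition operator `φ ↦ φ ∘ f` on `L^p(X,μ)`. -/
def RepsComp (μ : Measure X) (p : ℝ≥0∞) [Fact (1 ≤ p)] (f : X → X)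
    (T : Lp ℝ p μ ≃L[ℝ] Lp ℝ p μ) : Prop :=
  ∀ φ : Lp ℝ p μ, ⇑(T φ) =ᵐ[μ] fun x => (φ : X → ℝ) (f x)

section Orbits

omit [MeasurableSpace X] in
lemma img_img (f : Equiv.Perm X) (j k : ℤ) (S : Set X) :
    img f j (img f k S) = img f (j + k) S := by
  simp only [img, ← image_comp, ← Equiv.Perm.coe_mul, zpow_add]

omit [MeasurableSpace X] in
lemma img_zero (f : Equiv.Perm X) (S : Set X) : img f 0 S = S := by
  simp [img]

omit [MeasurableSpace X] in
lemma img_neg_natCast (f : Equiv.Perm X) (n : ℕ) (S : Set X) :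
    img f (-n) S = (⇑f)^[n] ⁻¹' S := by
  rw [img, zpow_neg, zpow_natCast, ← Equiv.Perm.coe_pow, Equiv.Perm.inv_def,
    Equiv.image_symm_eq_preimage]

omit [MeasurableSpace X] in
lemma img_natCast (f : Equiv.Perm X) (n : ℕ) (S : Set X) :
    img f n S = (⇑f.symm)^[n] ⁻¹' S := by
  rw [img, zpow_natCast, Equiv.image_eq_preimage_symm, ← Equiv.Perm.inv_def, ← inv_pow,
    Equiv.Perm.coe_pow, Equiv.Perm.inv_def]

lemma measurableSet_img {f : Equiv.Perm X} (hf : Measurable f) (hf' : Measurable f.symm)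
    (k : ℤ) {S : Set X} (hS : MeasurableSet S) : MeasurableSet (img f k S) := by
  obtain ⟨n, rfl | rfl⟩ := Int.eq_nat_or_neg k
  · rw [img_natCast]; exact hf'.iterate n hS
  · rw [img_neg_natCast]; exact hf.iterate n hS

end Orbits

section CondStar

variable {μ : Measure X} {g : X → X}

lemma CondStar.iterate (h : CondStar μ g) (hg : Measurable g) (n : ℕ) : CondStar μ g^[n] := by
  obtain ⟨c, hc0, hctop, hc⟩ := h
  refine ⟨c ^ n, ENNReal.pow_pos hc0 n, pow_ne_top hctop, fun B hB => ?_⟩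
  induction n with
  | zero => simp
  | succ n ih =>
    calc μ (g^[n + 1] ⁻¹' B) = μ (g ⁻¹' (g^[n] ⁻¹' B)) := by
          rw [Function.iterate_succ, Set.preimage_comp]
      _ ≤ c * μ (g^[n] ⁻¹' B) := hc _ (hg.iterate n hB)
      _ ≤ c * (c ^ n * μ B) := mul_le_mul_right ih c
      _ = c ^ (n + 1) * μ B := by ring

lemma CondStar.quasiMeasurePreserving (h : CondStar μ g) (hg : Measurable g) :
    Measure.QuasiMeasurePreserving g μ μ := by
  obtain ⟨c, -, -, hc⟩ := h
  refine ⟨hg, Measure.absolutelyContinuous_of_le_smul (c := c) (Measure.le_iff.2 fun B hB => ?_)⟩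
  rw [Measure.map_apply hg hB]
  exact hc B hB

lemma measure_img_ne_top {f : Equiv.Perm X} (hf : Measurable f) (hf' : Measurable f.symm)
    (hstar : CondStar μ f) (hstar' : CondStar μ f.symm) (k : ℤ) {S : Set X}
    (hS : MeasurableSet S) (hμS : μ S ≠ ⊤) : μ (img f k S) ≠ ⊤ := by
  suffices ∀ {g : X → X}, CondStar μ g → Measurable g → ∀ n : ℕ, μ (g^[n] ⁻¹' S) ≠ ⊤ by
    obtain ⟨n, rfl | rfl⟩ := Int.eq_nat_or_neg k
    · rw [img_natCast]; exact this hstar' hf' n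
    · rw [img_neg_natCast]; exact this hstar hf n
  intro g hg hgm n
  obtain ⟨c, -, hctop, hc⟩ := hg.iterate hgm n
  exact ne_top_of_le_ne_top (mul_ne_top hctop hμS) (hc S hS)

end CondStar

section Distortion

variable {μ : Measure X} {f : Equiv.Perm X} {W : Set X} {K : ℝ≥0∞}

lemma measure_img_mul_le (hdiss : IsDissipative μ f W) (hK0 : K ≠ 0) (hKfin : K ≠ ⊤)
    (hbd : BoundedDistortion μ f W K) (j k : ℤ) {E : Set X} (hE : MeasurableSet E)
    (hEW : E ⊆ img f k W) :
    μ (img f j E) * μ (img f k W) ≤ K ^ 2 * (μ (img f (j + k) W) * μ E) := by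
  set B := img f (-k) E
  have hBW : B ⊆ W := by
    have : img f (-k) E ⊆ img f (-k) (img f k W) := image_mono hEW
    rwa [img_img, neg_add_cancel, img_zero] at this
  have hkB : img f k B = E := by rw [img_img, add_neg_cancel, img_zero]
  have hB : MeasurableSet B := measurableSet_img hdiss.meas_f hdiss.meas_symm (-k) hE
  have hupper : μ (img f j E) * μ W ≤ K * (μ (img f (j + k) W) * μ B) := by
    rw [← hkB, img_img]
    exact (hbd (j + k) B hB hBW).2
  have hlower : μ (img f k W) * μ B ≤ K * (μ E * μ W) := by
    calc μ (img f k W) * μ B = K * (1 / K * (μ (img f k W) * μ B)) := by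
          rw [← mul_assoc, one_div, ENNReal.mul_inv_cancel hK0 hKfin, one_mul]
      _ ≤ K * (μ E * μ W) := mul_le_mul_right (hkB ▸ (hbd k B hB hBW).1) K
  rcases eq_or_ne (μ B) 0 with hB0 | hB0
  · have : μ (img f j E) = 0 := by simpa [hB0, hdiss.pos.ne'] using hupper
    simp [this]
  have hWB : μ W * μ B ≠ 0 := mul_ne_zero hdiss.pos.ne' hB0
  have hWB' : μ W * μ B ≠ ⊤ :=
    mul_ne_top hdiss.fin.ne (ne_top_of_le_ne_top hdiss.fin.ne (measure_mono hBW))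
  rw [← ENNReal.mul_le_mul_iff_left hWB hWB']
  calc μ (img f j E) * μ (img f k W) * (μ W * μ B)
      = (μ (img f j E) * μ W) * (μ (img f k W) * μ B) := by ring
    _ ≤ (K * (μ (img f (j + k) W) * μ B)) * (K * (μ E * μ W)) := mul_le_mul' hupper hlower
    _ = K ^ 2 * (μ (img f (j + k) W) * μ E) * (μ W * μ B) := by ring

lemma measure_img_le_of_subset_iUnion (hdiss : IsDissipative μ f W)
    (hfin : ∀ k, μ (img f k W) ≠ ⊤) (hK0 : K ≠ 0) (hKfin : K ≠ ⊤)
    (hbd : BoundedDistortion μ f W K) {ι : Type*} [Countable ι] {σ : ι → ℤ}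
    (hσ : Injective σ) {j : ℤ} {r : ℝ≥0∞}
    (hdecay : ∀ i, μ (img f (j + σ i) W) ≤ r * μ (img f (σ i) W))
    {S : Set X} (hS : MeasurableSet S) (hSW : S ⊆ ⋃ i, img f (σ i) W) :
    μ (img f j S) ≤ K ^ 2 * r * μ S := by
  set E : ι → Set X := fun i => S ∩ img f (σ i) W
  have hE : ∀ i, MeasurableSet (E i) := fun i =>
    hS.inter (measurableSet_img hdiss.meas_f hdiss.meas_symm _ hdiss.meas_W)
  have hSE : S = ⋃ i, E i := by rw [← inter_iUnion, inter_eq_left.2 hSW]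
  have hpiece : ∀ i, μ (img f j (E i)) ≤ K ^ 2 * r * μ (E i) := by
    intro i
    rcases eq_or_ne (μ (img f (σ i) W)) 0 with h0 | h0
    · have hsub : img f j (E i) ⊆ img f (j + σ i) W := by
        rw [← img_img]; exact image_mono inter_subset_right
      have : μ (img f j (E i)) = 0 :=
        measure_mono_null hsub (by simpa [h0] using hdecay i)
      simp [this]
    rw [← ENNReal.mul_le_mul_iff_left h0 (hfin _)]
    calc μ (img f j (E i)) * μ (img f (σ i) W)
        ≤ K ^ 2 * (μ (img f (j + σ i) W) * μ (E i)) :=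
          measure_img_mul_le hdiss hK0 hKfin hbd j (σ i) (hE i) inter_subset_right
      _ ≤ K ^ 2 * (r * μ (img f (σ i) W) * μ (E i)) := by gcongr; exact hdecay i
      _ = K ^ 2 * r * μ (E i) * μ (img f (σ i) W) := by ring
  calc μ (img f j S) = μ (⋃ i, img f j (E i)) := by rw [hSE, img, image_iUnion]; rfl
    _ ≤ ∑' i, μ (img f j (E i)) := measure_iUnion_le _
    _ ≤ ∑' i, K ^ 2 * r * μ (E i) := ENNReal.tsum_le_tsum hpiece
    _ = K ^ 2 * r * μ S := by
      rw [ENNReal.tsum_mul_left, hSE, measure_iUnion _ hE]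
      exact fun i i' hii' => (hdiss.disj (hσ.ne hii')).mono inter_subset_right inter_subset_right

end Distortion

lemma ContractsOn.of_eventually {E : Type*} [NormedAddCommGroup E] [NormedSpace ℝ E]
    {T : E ≃L[ℝ] E} {M : Submodule ℝ E} {C t : ℝ} (ht0 : 0 ≤ t) (ht1 : t < 1)
    (h : ∀ᶠ n in atTop, ∀ x ∈ M, ‖(T ^ n) x‖ ≤ C * t ^ n * ‖x‖) : ContractsOn T M := by
  obtain ⟨N, hN⟩ := eventually_atTop.1 h
  set L := max 1 ‖(T : E →L[ℝ] E)‖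
  have hL : 1 ≤ L := le_max_left _ _
  have hTn : ∀ n x, ‖(T ^ n) x‖ ≤ L ^ n * ‖x‖ := by
    intro n x
    induction n with
    | zero => rw [pow_zero, pow_zero, one_mul]; exact le_rfl
    | succ n ih =>
      rw [show (T ^ (n + 1)) x = T ((T ^ n) x) by rw [pow_succ']; rfl, pow_succ', mul_assoc]
      calc ‖T ((T ^ n) x)‖ ≤ ‖(T : E →L[ℝ] E)‖ * ‖(T ^ n) x‖ := (T : E →L[ℝ] E).le_opNorm _
        _ ≤ L * (L ^ n * ‖x‖) := by gcongr; exact le_max_right _ _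
  -- `t` is enlarged to be positive; the first `N` iterates are absorbed into the constant.
  set s := max t (1 / 2)
  have hs0 : 0 < s := lt_max_of_lt_right (by norm_num)
  have hs1 : s < 1 := max_lt ht1 (by norm_num)
  have hLs : 1 ≤ L / s := (one_le_div hs0).2 (le_trans hs1.le hL)
  refine ⟨max C ((L / s) ^ N), lt_max_of_lt_right (by positivity), s, hs0, hs1, fun n x hx => ?_⟩
  rcases le_total N n with hNn | hnN
  · calc ‖(T ^ n) x‖ ≤ C * t ^ n * ‖x‖ := hN n hNn x hx
      _ ≤ max C ((L / s) ^ N) * s ^ n * ‖x‖ := by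
        gcongr
        exacts [le_max_left _ _, le_max_left _ _]
  · calc ‖(T ^ n) x‖ ≤ L ^ n * ‖x‖ := hTn n x
      _ = (L / s) ^ n * s ^ n * ‖x‖ := by rw [div_pow, div_mul_cancel₀ _ (pow_pos hs0 n).ne']
      _ ≤ max C ((L / s) ^ N) * s ^ n * ‖x‖ := by
        gcongr
        exact (pow_le_pow_right₀ hLs hnN).trans (le_max_right _ _)

section Lp

variable {μ : Measure X} {p : ℝ≥0∞} [Fact (1 ≤ p)]

def vanishingOn (μ : Measure X) (p : ℝ≥0∞) [Fact (1 ≤ p)] (A : Set X) :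
    Submodule ℝ (Lp ℝ p μ) :=
  (LpToLpRestrictCLM X ℝ ℝ μ p A : Lp ℝ p μ →ₗ[ℝ] Lp ℝ p (μ.restrict A)).ker

lemma isClosed_vanishingOn (A : Set X) : IsClosed (vanishingOn μ p A : Set (Lp ℝ p μ)) :=
  ContinuousLinearMap.isClosed_ker _

lemma mem_vanishingOn {A : Set X} (hA : MeasurableSet A) {φ : Lp ℝ p μ} :
    φ ∈ vanishingOn μ p A ↔ ∀ᵐ x ∂μ, x ∈ A → φ x = 0 := by
  rw [vanishingOn, LinearMap.mem_ker, Lp.eq_zero_iff_ae_eq_zero, ← ae_restrict_iff' hA]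
  exact ⟨fun h => (LpToLpRestrictCLM_coeFn ℝ A φ).symm.trans h,
    fun h => (LpToLpRestrictCLM_coeFn ℝ A φ).trans h⟩

lemma coe_vanishingOn {A : Set X} (hA : MeasurableSet A) :
    (vanishingOn μ p A : Set (Lp ℝ p μ)) = {φ | ∀ᵐ x ∂μ, x ∈ A → φ x = 0} :=
  Set.ext fun _ => mem_vanishingOn hA

lemma isCompl_vanishingOn {A : Set X} (hA : MeasurableSet A) :
    IsCompl (vanishingOn μ p A) (vanishingOn μ p Aᶜ) := by
  constructor
  · refine Submodule.disjoint_def.2 fun φ hφA hφAc => Lp.eq_zero_iff_ae_eq_zero.2 ?_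
    filter_upwards [(mem_vanishingOn hA).1 hφA, (mem_vanishingOn hA.compl).1 hφAc]
      with x hxA hxAc
    by_cases hx : x ∈ A
    exacts [hxA hx, hxAc hx]
  · refine codisjoint_iff.2 (eq_top_iff.2 fun φ _ => ?_)
    set ψ : Lp ℝ p μ := ((Lp.memLp φ).indicator hA).toLp (A.indicator φ)
    have hψ : ψ =ᵐ[μ] A.indicator φ := MemLp.coeFn_toLp _
    refine Submodule.mem_sup.2 ⟨φ - ψ, ?_, ψ, ?_, sub_add_cancel φ ψ⟩
    · rw [mem_vanishingOn hA]
      filter_upwards [Lp.coeFn_sub φ ψ, hψ] with x hx hψx hxA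
      rw [hx, Pi.sub_apply, hψx, indicator_of_mem hxA, sub_self]
    · rw [mem_vanishingOn hA.compl]
      filter_upwards [hψ] with x hψx hxA
      rw [hψx, indicator_of_notMem hxA]

variable {g : X → X} {T : Lp ℝ p μ ≃L[ℝ] Lp ℝ p μ}

lemma RepsComp.pow (hT : RepsComp μ p g T) (hg : Measure.QuasiMeasurePreserving g μ μ)
    (n : ℕ) : RepsComp μ p g^[n] (T ^ n) := by
  induction n with
  | zero => exact fun φ => EventuallyEq.rfl
  | succ n ih =>
    intro φ
    rw [pow_succ, Function.iterate_succ']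
    exact (ih (T φ)).trans ((hg.iterate n).ae_eq_comp (hT φ))

lemma RepsComp.symm {f : Equiv.Perm X} (hT : RepsComp μ p f T)
    (hf' : Measure.QuasiMeasurePreserving f.symm μ μ) : RepsComp μ p f.symm T.symm := by
  intro φ
  have h := hf'.ae_eq_comp (hT (T.symm φ))
  simp only [Function.comp_def, Equiv.apply_symm_apply, ContinuousLinearEquiv.apply_symm_apply]
    at h
  exact h.symm

lemma RepsComp.apply_mem_vanishingOn (hT : RepsComp μ p g T)
    (hg : Measure.QuasiMeasurePreserving g μ μ) {A : Set X} (hA : MeasurableSet A)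
    (hgA : MapsTo g A A) {φ : Lp ℝ p μ} (hφ : φ ∈ vanishingOn μ p A) :
    T φ ∈ vanishingOn μ p A := by
  rw [mem_vanishingOn hA] at hφ ⊢
  filter_upwards [hT φ, hg.ae hφ] with x hx hφx hxA
  rw [hx]
  exact hφx (hgA hxA)

lemma RepsComp.eLpNorm_le (hp : p ≠ ⊤) (hT : RepsComp μ p g T)
    (hg : Measure.QuasiMeasurePreserving g μ μ) {A : Set X} (hA : MeasurableSet A)
    {c : ℝ≥0∞} (hc : ∀ S, MeasurableSet S → S ⊆ Aᶜ → μ (g ⁻¹' S) ≤ c * μ S)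
    {φ : Lp ℝ p μ} (hφ : φ ∈ vanishingOn μ p A) :
    eLpNorm (T φ) p μ ≤ c ^ (1 / p).toReal * eLpNorm φ p μ := by
  have hφA : φ =ᵐ[μ] Aᶜ.indicator φ := by
    filter_upwards [(mem_vanishingOn hA).1 hφ] with x hx
    by_cases hxA : x ∈ A
    · rw [hx hxA, indicator_of_notMem (notMem_compl_iff.2 hxA)]
    · rw [indicator_of_mem hxA]
  have hmap : (μ.map g).restrict Aᶜ ≤ c • μ := by
    refine Measure.le_iff.2 fun S hS => ?_
    rw [Measure.restrict_apply hS, Measure.map_apply hg.measurable (hS.inter hA.compl)]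
    calc μ (g ⁻¹' (S ∩ Aᶜ)) ≤ c * μ (S ∩ Aᶜ) := hc _ (hS.inter hA.compl) inter_subset_right
      _ ≤ c * μ S := by gcongr; exact inter_subset_left
  calc eLpNorm (T φ) p μ = eLpNorm (Aᶜ.indicator φ ∘ g) p μ :=
        eLpNorm_congr_ae ((hT φ).trans (hg.ae_eq_comp hφA))
    _ = eLpNorm φ p ((μ.map g).restrict Aᶜ) := by
        rw [← eLpNorm_map_measure _ hg.aemeasurable,
          eLpNorm_indicator_eq_eLpNorm_restrict hA.compl]
        exact ((Lp.stronglyMeasurable φ).indicator hA.compl).aestronglyMeasurable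
    _ ≤ eLpNorm φ p (c • μ) := eLpNorm_mono_measure _ hmap
    _ = c ^ (1 / p).toReal * eLpNorm φ p μ := eLpNorm_smul_measure_of_ne_top hp _ c

lemma RepsComp.contractsOn_vanishingOn (hp : p ≠ ⊤) (hT : RepsComp μ p g T)
    (hg : Measure.QuasiMeasurePreserving g μ μ) {A : Set X} (hA : MeasurableSet A)
    {C r : ℝ≥0∞} (hC : C ≠ ⊤) (hr : r < 1)
    (hdecay : ∀ᶠ n in atTop, ∀ S, MeasurableSet S → S ⊆ Aᶜ →
      μ (g^[n] ⁻¹' S) ≤ C * r ^ n * μ S) :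
    ContractsOn T (vanishingOn μ p A) := by
  set e := (1 / p).toReal
  have hp0 : p ≠ 0 := (zero_lt_one.trans_le (Fact.out : 1 ≤ p)).ne'
  have he : 0 < e := ENNReal.toReal_pos (by simpa using hp) (by simpa using hp0)
  refine ContractsOn.of_eventually (C := (C ^ e).toReal) toReal_nonneg
    ((ENNReal.toReal_lt_toReal (rpow_ne_top_of_nonneg he.le hr.ne_top) one_ne_top).2
      (rpow_lt_one hr he) |>.trans_eq toReal_one) (hdecay.mono fun n hn φ hφ => ?_)
  have hle := (hT.pow hg n).eLpNorm_le hp (hg.iterate n) hA hn hφ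
  rw [mul_rpow_of_nonneg _ _ he.le, ← rpow_natCast, ← rpow_mul, mul_comm _ e, rpow_mul,
    rpow_natCast] at hle
  rw [Lp.norm_def, Lp.norm_def, ← toReal_pow, ← toReal_mul, ← toReal_mul]
  exact toReal_mono (mul_ne_top (mul_ne_top (rpow_ne_top_of_nonneg he.le hC)
    (pow_ne_top (rpow_ne_top_of_nonneg he.le hr.ne_top))) (Lp.eLpNorm_ne_top φ)) hle

end Lp

lemma exists_pow_mul_of_limsup_lt {a : ℕ → ℕ → ℝ≥0∞} {b : ℕ → ℝ≥0∞}
    (h : limsup (fun n : ℕ => ⨆ m, (a n m / b m) ^ (1 / (n : ℝ))) atTop < 1) :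
    ∃ r < 1, ∀ᶠ n in atTop, ∀ m, a n m ≤ r ^ n * b m := by
  obtain ⟨r, hlim, hr⟩ := exists_between h
  have hr0 : r ≠ 0 := (pos_of_gt hlim).ne'
  refine ⟨r, hr, ?_⟩
  filter_upwards [eventually_lt_of_limsup_lt hlim, eventually_gt_atTop 0] with n hn hn0 m
  have hm : (a n m / b m) ^ (1 / (n : ℝ)) ≤ r := (le_iSup_of_le m le_rfl).trans hn.le
  rw [one_div, rpow_inv_le_iff (by positivity), rpow_natCast] at hm
  exact (ENNReal.div_le_iff_le_mul (.inr (pow_ne_top hr.ne_top)) (.inr (pow_ne_zero n hr0))).1 hm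

lemma exists_pow_mul_of_one_lt_liminf {a : ℕ → ℕ → ℝ≥0∞} {b : ℕ → ℝ≥0∞}
    (h : 1 < liminf (fun n : ℕ => ⨅ m, (b m / a n m) ^ (1 / (n : ℝ))) atTop) :
    ∃ r < 1, ∀ᶠ n in atTop, ∀ m, a n m ≤ r ^ n * b m := by
  obtain ⟨s, hs, hlim⟩ := exists_between h
  have hs0 : s ≠ 0 := (one_pos.trans hs).ne'
  have hstop : s ≠ ⊤ := ne_top_of_lt hlim
  refine ⟨s⁻¹, ENNReal.inv_lt_one.2 hs, ?_⟩
  filter_upwards [eventually_lt_of_lt_liminf hlim, eventually_gt_atTop 0] with n hn hn0 m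
  have hm : s ≤ (b m / a n m) ^ (1 / (n : ℝ)) := hn.le.trans (iInf_le_of_le m le_rfl)
  rw [one_div, le_rpow_inv_iff (by positivity), rpow_natCast] at hm
  calc a n m = s⁻¹ ^ n * (s ^ n * a n m) := by
        rw [← mul_assoc, ← mul_pow, ENNReal.inv_mul_cancel hs0 hstop, one_pow, one_mul]
    _ ≤ s⁻¹ ^ n * b m := mul_le_mul_right (ENNReal.mul_le_of_le_div hm) _

section Dissipative

variable {μ : Measure X} {f : Equiv.Perm X} {W : Set X}

omit [MeasurableSpace X] in
lemma mapsTo_iUnion_img_natCast (f : Equiv.Perm X) (W : Set X) :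
    MapsTo f (⋃ k : ℕ, img f k W) (⋃ k : ℕ, img f k W) := by
  intro x hx
  obtain ⟨k, hk⟩ := mem_iUnion.1 hx
  have : f x ∈ img f 1 (img f k W) := ⟨x, hk, by simp⟩
  rw [img_img, add_comm] at this
  exact mem_iUnion.2 ⟨k + 1, by exact_mod_cast this⟩

lemma IsDissipative.iUnion_img_neg_sub_one_eq_compl (hdiss : IsDissipative μ f W) :
    ⋃ k : ℕ, img f (-(k : ℤ) - 1) W = (⋃ k : ℕ, img f k W)ᶜ := by
  ext x
  simp only [mem_compl_iff, mem_iUnion, not_exists]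
  constructor
  · rintro ⟨k, hk⟩ j hj
    exact disjoint_left.1 (hdiss.disj (by omega : -(k : ℤ) - 1 ≠ j)) hk hj
  · intro hx
    obtain ⟨k, hk⟩ := mem_iUnion.1 (hdiss.cover ▸ mem_univ x)
    obtain ⟨n, rfl | rfl⟩ := Int.eq_nat_or_neg k
    · exact absurd hk (hx n)
    · obtain ⟨m, rfl⟩ : ∃ m, n = m + 1 := Nat.exists_eq_add_one.2
        (Nat.pos_of_ne_zero fun hn => hx 0 (by simpa [hn] using hk))
      exact ⟨m, by rwa [Nat.cast_add, Nat.cast_one, neg_add, ← sub_eq_add_neg] at hk⟩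

variable {K : ℝ≥0∞} (hdiss : IsDissipative μ f W) (hfin : ∀ k, μ (img f k W) ≠ ⊤) (hK0 : K ≠ 0)
  (hKfin : K ≠ ⊤) (hbd : BoundedDistortion μ f W K)
include hdiss hfin hK0 hKfin hbd

lemma IsDissipative.exists_measure_preimage_iterate_le (hGH : limsup (fun n : ℕ =>
      ⨆ m : ℕ, (μ (img f (-(m : ℤ) - (n : ℤ)) W) / μ (img f (-(m : ℤ)) W)) ^ (1 / (n : ℝ)))
      atTop < 1) :
    ∃ r < 1, ∀ᶠ n in atTop, ∀ S, MeasurableSet S → S ⊆ ⋃ k : ℕ, img f (-(k : ℤ) - 1) W →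
      μ ((⇑f)^[n] ⁻¹' S) ≤ K ^ 2 * r ^ n * μ S := by
  obtain ⟨r, hr, hdecay⟩ := exists_pow_mul_of_limsup_lt hGH
  refine ⟨r, hr, hdecay.mono fun n hn S hS hSW => ?_⟩
  rw [← img_neg_natCast]
  refine measure_img_le_of_subset_iUnion hdiss hfin hK0 hKfin hbd
    (fun _ _ h => by simpa using h) (fun k => ?_) hS hSW
  convert hn (k + 1) using 3 <;> push_cast <;> ring_nf

lemma IsDissipative.exists_measure_preimage_iterate_symm_le (hGH : 1 < liminf (fun n : ℕ =>
      ⨅ m : ℕ, (μ (img f (m : ℤ) W) / μ (img f ((m : ℤ) + (n : ℤ)) W)) ^ (1 / (n : ℝ))) atTop) :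
    ∃ r < 1, ∀ᶠ n in atTop, ∀ S, MeasurableSet S → S ⊆ ⋃ k : ℕ, img f k W →
      μ ((⇑f.symm)^[n] ⁻¹' S) ≤ K ^ 2 * r ^ n * μ S := by
  obtain ⟨r, hr, hdecay⟩ := exists_pow_mul_of_one_lt_liminf hGH
  refine ⟨r, hr, hdecay.mono fun n hn S hS hSW => ?_⟩
  rw [← img_natCast]
  refine measure_img_le_of_subset_iUnion hdiss hfin hK0 hKfin hbd
    Nat.cast_injective (fun k => ?_) hS hSW
  rw [add_comm]
  exact hn k

end Dissipative

/-- Theorem SS, part 3: if condition 𝓖𝓗 holds, then the composition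
operator `T_f` on `L^p(X,μ)` is generalized hyperbolic, and the witnessing splitting is
`L^p = L_+ ⊕ L_-`, where `L_+` consists of the functions vanishing a.e. on
`⋃_{k≥0} f^k(W)` and `L_-` of the functions vanishing a.e. on `⋃_{k≥1} f^{-k}(W)`. -/
theorem generalizedHyperbolic_of_condGH
    {X : Type*} [MeasurableSpace X] (μ : Measure X) (f : Equiv.Perm X) (W : Set X)
    (p : ℝ≥0∞) [Fact (1 ≤ p)] (hp : p ≠ ⊤)
    (hdiss : IsDissipative μ f W)
    (K : ℝ≥0∞) (hK0 : 0 < K) (hKfin : K ≠ ⊤)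
    (hbd : BoundedDistortion μ f W K)
    (hstar : CondStar μ f) (hstar' : CondStar μ f.symm)
    (T : Lp ℝ p μ ≃L[ℝ] Lp ℝ p μ) (hT : RepsComp μ p f T)
    (hGH : CondGH μ f W) :
    GeneralizedHyperbolic T ∧
      ∃ M N : Submodule ℝ (Lp ℝ p μ),
        IsClosed (M : Set (Lp ℝ p μ)) ∧ IsClosed (N : Set (Lp ℝ p μ)) ∧ IsCompl M N ∧
        (M : Set (Lp ℝ p μ)) =
          {φ : Lp ℝ p μ | ∀ᵐ x ∂μ, x ∈ (⋃ k : ℕ, img f (k : ℤ) W) → (φ : X → ℝ) x = 0} ∧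
        (N : Set (Lp ℝ p μ)) =
          {φ : Lp ℝ p μ | ∀ᵐ x ∂μ, x ∈ (⋃ k : ℕ, img f (-(k : ℤ) - 1) W) → (φ : X → ℝ) x = 0} ∧
        (∀ φ ∈ M, T φ ∈ M) ∧ (∀ φ ∈ N, T.symm φ ∈ N) ∧
        ContractsOn T M ∧ ContractsOn T.symm N := by
  obtain ⟨-, hf, hf', hW, -, hWfin, -, -⟩ := id hdiss
  have hfq := hstar.quasiMeasurePreserving hf
  have hfq' := hstar'.quasiMeasurePreserving hf'
  have hfin k := measure_img_ne_top hf hf' hstar hstar' k hW hWfin.ne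
  set A := ⋃ k : ℕ, img f k W
  set B := ⋃ k : ℕ, img f (-(k : ℤ) - 1) W
  have hBA : B = Aᶜ := hdiss.iUnion_img_neg_sub_one_eq_compl
  have hA : MeasurableSet A := .iUnion fun k => measurableSet_img hf hf' _ hW
  have hB : MeasurableSet B := hBA ▸ hA.compl
  have hcompl : IsCompl (vanishingOn μ p A) (vanishingOn μ p B) := hBA ▸ isCompl_vanishingOn hA
  have hMinv (φ) : φ ∈ vanishingOn μ p A → T φ ∈ vanishingOn μ p A :=
    hT.apply_mem_vanishingOn hfq hA (mapsTo_iUnion_img_natCast f W)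
  have hNinv (φ) : φ ∈ vanishingOn μ p B → T.symm φ ∈ vanishingOn μ p B :=
    (hT.symm hfq').apply_mem_vanishingOn hfq' hB <| hBA ▸ fun x hx hxA =>
      hx (f.apply_symm_apply x ▸ mapsTo_iUnion_img_natCast f W hxA)
  have hM : ContractsOn T (vanishingOn μ p A) := by
    obtain ⟨r, hr, hdecay⟩ :=
      hdiss.exists_measure_preimage_iterate_le hfin hK0.ne' hKfin hbd hGH.1
    refine hT.contractsOn_vanishingOn hp hfq hA (pow_ne_top (n := 2) hKfin) hr ?_
    rwa [← hBA]
  have hN : ContractsOn T.symm (vanishingOn μ p B) := by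
    obtain ⟨r, hr, hdecay⟩ :=
      hdiss.exists_measure_preimage_iterate_symm_le hfin hK0.ne' hKfin hbd hGH.2
    refine (hT.symm hfq').contractsOn_vanishingOn hp hfq' hB (pow_ne_top (n := 2) hKfin) hr ?_
    rwa [hBA, compl_compl]
  exact ⟨⟨_, _, isClosed_vanishingOn A, isClosed_vanishingOn B, hcompl, hMinv, hNinv, hM, hN⟩,
    _, _, isClosed_vanishingOn A, isClosed_vanishingOn B, hcompl, coe_vanishingOn hA,
    coe_vanishingOn hB, hMinv, hNinv, hM, hN⟩

end GHShadow
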